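/- arXiv:2509.19670 — 4 statements merged into one kernel-verified Lean document; each statement's English description precedes it below -/
import Mathlib

section
/- Define κ∘(δ,η) := sup over (u,z) with ‖u‖₂ = 1, ‖z‖₂ ≤ δ, uᵀz ≥ η of (min over β ∈ [0,1] of ‖u − βz‖₂). If δ ≥ η > 0, then κ∘(δ,η) < 1. -/
open RealInnerProductSpace

/-- `κ∘(δ,η)`: the supremum over `(u,z)` with `‖u‖ = 1`, `‖z‖ ≤ δ`, `⟪u,z⟫ ≥ η` of
`min_{β ∈ [0,1]} ‖u - β z‖`. -/
noncomputable def kappaCirc (d : ℕ) (δ η : ℝ) : ℝ :=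
  sSup {m : ℝ | ∃ u z : EuclideanSpace ℝ (Fin d), ‖u‖ = 1 ∧ ‖z‖ ≤ δ ∧ ⟪u, z⟫ ≥ η ∧
    m = sInf {t : ℝ | ∃ β ∈ Set.Icc (0:ℝ) 1, t = ‖u - β • z‖}}

/-- If `δ ≥ η > 0` then `κ∘(δ,η) < 1`. -/
theorem stmt5 (d : ℕ) (hd : 1 ≤ d) (δ η : ℝ) (hηδ : η ≤ δ) (hη : 0 < η) :
    kappaCirc d δ η < 1 := by
  have hδ : 0 < δ := lt_of_lt_of_le hη hηδ
  set m₀ : ℝ := min η (η ^ 2 / δ ^ 2) with hm₀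
  have hm₀pos : 0 < m₀ := lt_min hη (by positivity)
  have hm₀le : m₀ ≤ η := min_le_left _ _
  set c : ℝ := Real.sqrt (1 - m₀) with hc
  have hclt : c < 1 := by
    rw [hc, Real.sqrt_lt' one_pos]
    nlinarith
  have hmain : kappaCirc d δ η ≤ c := by
    apply Real.sSup_le
    · rintro x ⟨u, z, hu, hz, huz, rfl⟩
      set β₀ : ℝ := min 1 (η / δ ^ 2) with hβ₀
      have hβ₀nn : 0 ≤ β₀ := le_min zero_le_one (by positivity)
      have hβ₀le : β₀ ≤ 1 := min_le_left _ _
      -- the key bound : ‖u - β₀ • z‖ ≤ c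
      have hkey : ‖u - β₀ • z‖ ≤ c := by
        have hsq : ‖u - β₀ • z‖ ^ 2 = 1 - 2 * β₀ * ⟪u, z⟫ + β₀ ^ 2 * ‖z‖ ^ 2 := by
          rw [norm_sub_sq_real, real_inner_smul_right, norm_smul, hu]
          simp [mul_pow]
          ring
        have hzsq : ‖z‖ ^ 2 ≤ δ ^ 2 := by
          have := norm_nonneg z
          nlinarith
        have hbound : ‖u - β₀ • z‖ ^ 2 ≤ 1 - m₀ := by
          rw [hsq]
          have h1 : β₀ ^ 2 * ‖z‖ ^ 2 ≤ β₀ ^ 2 * δ ^ 2 := by nlinarith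
          have h2 : 2 * β₀ * η ≤ 2 * β₀ * ⟪u, z⟫ := by nlinarith
          have h3 : m₀ ≤ 2 * β₀ * η - β₀ ^ 2 * δ ^ 2 := by
            rcases le_or_gt (η / δ ^ 2) 1 with h | h
            · have hb : β₀ = η / δ ^ 2 := min_eq_right h
              have : m₀ ≤ η ^ 2 / δ ^ 2 := min_le_right _ _
              have hδ2 : (0:ℝ) < δ ^ 2 := by positivity
              have heq : 2 * (η / δ ^ 2) * η - (η / δ ^ 2) ^ 2 * δ ^ 2 = η ^ 2 / δ ^ 2 := by
                field_simp
                ring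
              rw [hb]
              linarith
            · have hb : β₀ = 1 := min_eq_left h.le
              have hδη : δ ^ 2 ≤ η := by
                have hδ2 : (0:ℝ) < δ ^ 2 := by positivity
                exact ((one_lt_div hδ2).mp h).le
              rw [hb]
              nlinarith [hm₀le]
          linarith
        rw [hc]
        rw [show ‖u - β₀ • z‖ = Real.sqrt (‖u - β₀ • z‖ ^ 2) by
          rw [Real.sqrt_sq (norm_nonneg _)]]
        exact Real.sqrt_le_sqrt hbound
      -- sInf ≤ the value at β₀
      have hmem : ‖u - β₀ • z‖ ∈ {t : ℝ | ∃ β ∈ Set.Icc (0:ℝ) 1, t = ‖u - β • z‖} :=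
        ⟨β₀, ⟨hβ₀nn, hβ₀le⟩, rfl⟩
      have hbdd : BddBelow {t : ℝ | ∃ β ∈ Set.Icc (0:ℝ) 1, t = ‖u - β • z‖} :=
        ⟨0, by rintro t ⟨β, _, rfl⟩; exact norm_nonneg _⟩
      exact le_trans (csInf_le hbdd hmem) hkey
    · exact Real.sqrt_nonneg _
  linarith
end

section
/- Let δ, η ∈ ℝ with 0 ≤ η ≤ min{δ², δ}, and work in ℝ^d with d ≥ 2. Then κ∘(δ,η) = √(1 − η²/δ²), where κ∘(δ,η) is the supremum over u, z ∈ ℝ^d with ‖u‖₂ = 1, ‖z‖₂ ≤ δ, uᵀz ≥ η of min_{β∈[0,1]} ‖u − βz‖₂. -/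
/-!
The inner minimum is the distance from `u` to the segment `[0, z]`. It is at least the distance
`√(‖u‖² - ⟪u,z⟫²/‖z‖²)` from `u` to the line `ℝ z`, with equality for the extremal pair
`u = e₁`, `z = η e₁ + √(δ² - η²) e₂`, whose foot of the perpendicular `β = η/δ²` lies in `[0, 1]`.
Conversely, for every feasible pair the choice `β = η/δ²` gives
`‖u - β z‖² ≤ 1 - 2βη + β²δ² = 1 - η²/δ²`.
-/

open RealInnerProductSpace

variable {E : Type*} [NormedAddCommGroup E] [InnerProductSpace ℝ E]

noncomputable def infDistToSegment (u z : E) : ℝ :=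
  sInf {t : ℝ | ∃ β ∈ Set.Icc (0:ℝ) 1, t = ‖u - β • z‖}

lemma kappaCirc_eq (d : ℕ) (δ η : ℝ) :
    kappaCirc d δ η = sSup {m : ℝ | ∃ u z : EuclideanSpace ℝ (Fin d),
      ‖u‖ = 1 ∧ ‖z‖ ≤ δ ∧ η ≤ ⟪u, z⟫ ∧ m = infDistToSegment u z} :=
  rfl

lemma norm_sub_smul_sq (u z : E) (β : ℝ) :
    ‖u - β • z‖ ^ 2 = ‖u‖ ^ 2 - 2 * β * ⟪u, z⟫ + β ^ 2 * ‖z‖ ^ 2 := by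
  rw [norm_sub_sq_real, real_inner_smul_right, norm_smul, mul_pow, Real.norm_eq_abs, sq_abs]
  ring

lemma infDistToSegment_le (u z : E) {β : ℝ} (hβ : β ∈ Set.Icc (0:ℝ) 1) :
    infDistToSegment u z ≤ ‖u - β • z‖ :=
  csInf_le ⟨0, fun _ ⟨_, _, ht⟩ => ht ▸ norm_nonneg _⟩ ⟨β, hβ, rfl⟩

lemma sqrt_sub_inner_sq_div_le_infDistToSegment (u z : E) :
    √(‖u‖ ^ 2 - ⟪u, z⟫ ^ 2 / ‖z‖ ^ 2) ≤ infDistToSegment u z := by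
  refine le_csInf ⟨_, 0, ⟨le_rfl, zero_le_one⟩, rfl⟩ ?_
  rintro t ⟨β, -, rfl⟩
  rw [Real.sqrt_le_left (norm_nonneg _)]
  rcases eq_or_ne z 0 with rfl | hz
  · -- both sides are `‖u‖ ^ 2`, as `_ / 0 = 0`
    simp
  have hsplit : ‖u‖ ^ 2 - ⟪u, z⟫ ^ 2 / ‖z‖ ^ 2
      = ‖u - β • z‖ ^ 2 - (β * ‖z‖ ^ 2 - ⟪u, z⟫) ^ 2 / ‖z‖ ^ 2 := by
    rw [norm_sub_smul_sq]
    field_simp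
    ring
  rw [hsplit]
  exact sub_le_self _ (by positivity)

lemma infDistToSegment_le_sqrt {δ η : ℝ} (hη0 : 0 ≤ η) (hηδ : η ≤ δ ^ 2) {u z : E}
    (hz : ‖z‖ ≤ δ) (huz : η ≤ ⟪u, z⟫) :
    infDistToSegment u z ≤ √(‖u‖ ^ 2 - η ^ 2 / δ ^ 2) := by
  set β := η / δ ^ 2
  have hβ : β ∈ Set.Icc (0:ℝ) 1 := ⟨by positivity, div_le_one_of_le₀ hηδ (sq_nonneg δ)⟩
  -- `β δ² = η` also when `δ = 0`, since then `η = 0`.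
  have hβδ : β * δ ^ 2 = η := by
    rcases eq_or_ne δ 0 with rfl | hδ
    · rw [zero_pow two_ne_zero] at hηδ ⊢
      linarith
    · exact div_mul_cancel₀ η (by positivity)
  have hzδ : ‖z‖ ^ 2 ≤ δ ^ 2 := pow_le_pow_left₀ (norm_nonneg z) hz 2
  refine (infDistToSegment_le u z hβ).trans (Real.le_sqrt_of_sq_le ?_)
  have hηβ : η ^ 2 / δ ^ 2 = η * β := by ring
  rw [norm_sub_smul_sq, hηβ]
  nlinarith [mul_le_mul_of_nonneg_left hzδ (sq_nonneg β), hβ.1]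

lemma exists_norm_eq_inner_eq [FiniteDimensional ℝ E] (hE : 2 ≤ Module.finrank ℝ E)
    {δ η : ℝ} (hη0 : 0 ≤ η) (hηδ : η ≤ δ) :
    ∃ u z : E, ‖u‖ = 1 ∧ ‖z‖ = δ ∧ ⟪u, z⟫ = η := by
  have hb := (stdOrthonormalBasis ℝ E).orthonormal
  set u := stdOrthonormalBasis ℝ E ⟨0, by omega⟩
  set v := stdOrthonormalBasis ℝ E ⟨1, by omega⟩
  have hu : ‖u‖ = 1 := hb.1 _
  have hv : ‖v‖ = 1 := hb.1 _
  have huv : ⟪u, v⟫ = 0 := hb.2 (by simp [Fin.ext_iff])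
  set c := √(δ ^ 2 - η ^ 2)
  have hc : c ^ 2 = δ ^ 2 - η ^ 2 := Real.sq_sqrt (by nlinarith)
  refine ⟨u, η • u + c • v, hu, ?_, ?_⟩
  · have hsq : ‖η • u + c • v‖ ^ 2 = δ ^ 2 := by
      rw [norm_add_sq_real, norm_smul, norm_smul, real_inner_smul_left, real_inner_smul_right,
        huv, hu, hv, Real.norm_eq_abs, Real.norm_eq_abs]
      nlinarith [sq_abs η, sq_abs c]
    exact (pow_left_inj₀ (norm_nonneg _) (hη0.trans hηδ) two_ne_zero).mp hsq
  · rw [inner_add_right, real_inner_smul_right, real_inner_smul_right, huv,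
      real_inner_self_eq_norm_sq, hu]
    ring

/-- If `0 ≤ η ≤ min{δ², δ}` and `d ≥ 2`, then `κ∘(δ,η) = √(1 - η²/δ²)`. -/
theorem stmt10 (d : ℕ) (hd : 2 ≤ d) (δ η : ℝ) (hη0 : 0 ≤ η) (hη : η ≤ min (δ ^ 2) δ) :
    kappaCirc d δ η = Real.sqrt (1 - η ^ 2 / δ ^ 2) := by
  obtain ⟨hηδ2, hηδ⟩ := le_min_iff.mp hη
  have hupper : ∀ u z : EuclideanSpace ℝ (Fin d), ‖u‖ = 1 → ‖z‖ ≤ δ → η ≤ ⟪u, z⟫ →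
      infDistToSegment u z ≤ √(1 - η ^ 2 / δ ^ 2) := fun u z hu hz huz => by
    simpa [hu] using infDistToSegment_le_sqrt hη0 hηδ2 hz huz
  obtain ⟨u, z, hu, hz, huz⟩ := exists_norm_eq_inner_eq (E := EuclideanSpace ℝ (Fin d))
    (by rwa [finrank_euclideanSpace_fin]) hη0 hηδ
  have hattained : infDistToSegment u z = √(1 - η ^ 2 / δ ^ 2) :=
    le_antisymm (hupper u z hu hz.le huz.ge)
      (by simpa [hu, hz, huz] using sqrt_sub_inner_sq_div_le_infDistToSegment u z)
  rw [kappaCirc_eq]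
  refine IsGreatest.csSup_eq ⟨⟨u, z, hu, hz.le, huz.ge, hattained.symm⟩, ?_⟩
  rintro m ⟨u', z', hu', hz', hu'z', rfl⟩
  exact hupper u' z' hu' hz' hu'z'
end

section
/- Let δ, η ∈ ℝ with δ² < η ≤ δ, and work in ℝ^d with d ≥ 2. Then κ∘(δ,η) = √(1 + δ² − 2η), where κ∘(δ,η) is the supremum over u, z ∈ ℝ^d with ‖u‖₂ = 1, ‖z‖₂ ≤ δ, uᵀz ≥ η of min_{β∈[0,1]} ‖u − βz‖₂. -/
open RealInnerProductSpace

lemma inner_min_eq {d : ℕ} (δ η : ℝ) (h1 : δ ^ 2 < η)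
    (u z : EuclideanSpace ℝ (Fin d)) (hu : ‖u‖ = 1) (hz : ‖z‖ ≤ δ) (hip : ⟪u, z⟫ ≥ η) :
    sInf {t : ℝ | ∃ β ∈ Set.Icc (0:ℝ) 1, t = ‖u - β • z‖} = ‖u - z‖ := by
  apply IsLeast.csInf_eq
  constructor
  · exact ⟨1, by norm_num, by rw [one_smul]⟩
  · rintro t ⟨β, ⟨hβ0, hβ1⟩, rfl⟩
    have hz2 : ‖z‖ ^ 2 ≤ δ ^ 2 := by nlinarith [norm_nonneg z]
    have e1 : ‖u - z‖ ^ 2 = 1 - 2 * ⟪u, z⟫ + ‖z‖ ^ 2 := by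
      rw [norm_sub_sq_real, hu]; ring
    have e2 : ‖u - β • z‖ ^ 2 = 1 - 2 * (β * ⟪u, z⟫) + β ^ 2 * ‖z‖ ^ 2 := by
      rw [norm_sub_sq_real, hu, real_inner_smul_right, norm_smul,
        Real.norm_eq_abs, abs_of_nonneg hβ0]; ring
    nlinarith [norm_nonneg (u - z), norm_nonneg (u - β • z),
      mul_nonneg (sub_nonneg.2 hβ1) (by nlinarith : (0:ℝ) ≤ 2 * ⟪u, z⟫ - (1 + β) * ‖z‖ ^ 2)]

/-- If `δ² < η ≤ δ` and `d ≥ 2`, then `κ∘(δ,η) = √(1 + δ² - 2η)`. -/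
theorem stmt11 (d : ℕ) (hd : 2 ≤ d) (δ η : ℝ) (h1 : δ ^ 2 < η) (h2 : η ≤ δ) :
    kappaCirc d δ η = Real.sqrt (1 + δ ^ 2 - 2 * η) := by
  have hη : 0 < η := lt_of_le_of_lt (sq_nonneg δ) h1
  have hδ : 0 < δ := lt_of_lt_of_le hη h2
  have hc2 : 0 ≤ δ ^ 2 - η ^ 2 := by nlinarith
  set c := Real.sqrt (δ ^ 2 - η ^ 2) with hc
  have hcsq : c ^ 2 = δ ^ 2 - η ^ 2 := Real.sq_sqrt hc2
  set i0 : Fin d := ⟨0, by omega⟩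
  set i1 : Fin d := ⟨1, by omega⟩
  have hne : i1 ≠ i0 := by simp [i0, i1, Fin.ext_iff]
  set u : EuclideanSpace ℝ (Fin d) := EuclideanSpace.single i0 1 with hudef
  set v : EuclideanSpace ℝ (Fin d) := EuclideanSpace.single i1 1 with hvdef
  set z : EuclideanSpace ℝ (Fin d) := η • u + c • v with hzdef
  have hu : ‖u‖ = 1 := by simp [hudef]
  have huu : ⟪u, u⟫ = 1 := by
    rw [real_inner_self_eq_norm_sq, hu]; norm_num
  have hvv : ⟪v, v⟫ = 1 := by
    rw [real_inner_self_eq_norm_sq]; simp [hvdef]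
  have huv : ⟪u, v⟫ = 0 := by
    simp [hudef, hvdef, EuclideanSpace.inner_single_left, EuclideanSpace.single_apply, hne]
  have hvu : ⟪v, u⟫ = 0 := by rw [real_inner_comm]; exact huv
  have hip : ⟪u, z⟫ = η := by
    rw [hzdef, inner_add_right, real_inner_smul_right, real_inner_smul_right, huu, huv]
    ring
  have hz2 : ‖z‖ ^ 2 = δ ^ 2 := by
    rw [← real_inner_self_eq_norm_sq, hzdef]
    rw [inner_add_add_self]
    simp only [real_inner_smul_left, real_inner_smul_right, huu, huv, hvv, hvu]
    nlinarith
  have hznorm : ‖z‖ = δ := by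
    rw [show ‖z‖ = Real.sqrt (‖z‖ ^ 2) from (Real.sqrt_sq (norm_nonneg _)).symm, hz2,
      Real.sqrt_sq hδ.le]
  have hM0 : 0 ≤ 1 + δ ^ 2 - 2 * η := by nlinarith
  have huz : ‖u - z‖ ^ 2 = 1 + δ ^ 2 - 2 * η := by
    rw [norm_sub_sq_real, hu, hip, hz2]; ring
  have key : Real.sqrt (1 + δ ^ 2 - 2 * η) = ‖u - z‖ := by
    rw [← huz, Real.sqrt_sq (norm_nonneg _)]
  apply IsGreatest.csSup_eq
  constructor
  · refine ⟨u, z, hu, le_of_eq hznorm, ge_of_eq hip, ?_⟩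
    · rw [inner_min_eq δ η h1 u z hu (le_of_eq hznorm) (ge_of_eq hip), key]
  · rintro m ⟨u', z', hu', hz', hip', rfl⟩
    rw [inner_min_eq δ η h1 u' z' hu' hz' hip']
    rw [show Real.sqrt (1 + δ ^ 2 - 2 * η) = Real.sqrt (1 + δ ^ 2 - 2 * η) from rfl]
    have hb : ‖u' - z'‖ ^ 2 ≤ 1 + δ ^ 2 - 2 * η := by
      rw [norm_sub_sq_real, hu']
      nlinarith [norm_nonneg z']
    calc ‖u' - z'‖ = Real.sqrt (‖u' - z'‖ ^ 2) := (Real.sqrt_sq (norm_nonneg _)).symm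
      _ ≤ Real.sqrt (1 + δ ^ 2 - 2 * η) := Real.sqrt_le_sqrt hb
end

section
/- With the alternating sequence of Example bad-perceptron (x_t = (c,1), y_t = +1 for odd t; x_t = (c+r,−1), y_t = −1 for even t), c > 2 and r = 2/c, the perceptron makes a mistake at every time t ≤ m where m := ⌊(c² + 4/c² + 5)/(2(1 + 1/c²))⌋; that is, y_t w_tᵀ x_t ≤ 0 for all t ≤ m, where w_t is as in the closed form w_t = (c − (t/2−1)r, t−1) for even t and w_t = (t−1)(−r/2, 1) for odd t. -/
/-- In Example bad-perceptron with `c > 2`, `r = 2/c` and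
`m = ⌊(c² + 4/c² + 5)/(2(1 + 1/c²))⌋`, the perceptron (with iterates given by their
closed form) makes a mistake at every time `t ≤ m`: `y_t w_tᵀ x_t ≤ 0`. -/
theorem stmt17 (c : ℝ) (hc : 2 < c) (r : ℝ) (hr : r = 2 / c)
    (m : ℕ) (hm : m = ⌊(c ^ 2 + 4 / c ^ 2 + 5) / (2 * (1 + 1 / c ^ 2))⌋₊)
    (t : ℕ) (ht1 : 1 ≤ t) (htm : t ≤ m) :
    (Even t →
      (-1 : ℝ) * ((c - ((t : ℝ) / 2 - 1) * r) * (c + r) + ((t : ℝ) - 1) * (-1)) ≤ 0) ∧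
    (Odd t →
      (1 : ℝ) * ((((t : ℝ) - 1) * (-r / 2)) * c + (((t : ℝ) - 1) * 1) * 1) ≤ 0) := by
  have hc0 : (0:ℝ) < c := by linarith
  have hc0' : c ≠ 0 := ne_of_gt hc0
  have hc2 : (0:ℝ) < c ^ 2 := by positivity
  have hrc : r * c = 2 := by rw [hr]; field_simp
  set X : ℝ := (c ^ 2 + 4 / c ^ 2 + 5) / (2 * (1 + 1 / c ^ 2)) with hX
  have hden : (0:ℝ) < 2 * (1 + 1 / c ^ 2) := by positivity
  have hXnn : 0 ≤ X := by positivity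
  have htX : (t : ℝ) ≤ X := by
    calc (t : ℝ) ≤ (m : ℝ) := by exact_mod_cast htm
    _ ≤ X := by rw [hm]; exact Nat.floor_le hXnn
  have htX' : (t : ℝ) * (2 * (1 + 1 / c ^ 2)) ≤ c ^ 2 + 4 / c ^ 2 + 5 :=
    (le_div_iff₀ hden).mp htX
  have key : (t : ℝ) * (2 * c ^ 2 + 2) ≤ c ^ 4 + 5 * c ^ 2 + 4 := by
    have h := mul_le_mul_of_nonneg_right htX' (le_of_lt hc2)
    have e1 : ((t : ℝ) * (2 * (1 + 1 / c ^ 2))) * c ^ 2 = (t : ℝ) * (2 * c ^ 2 + 2) := by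
      field_simp
    have e2 : (c ^ 2 + 4 / c ^ 2 + 5) * c ^ 2 = c ^ 4 + 5 * c ^ 2 + 4 := by
      field_simp; ring
    rw [e1, e2] at h; exact h
  constructor
  · intro _
    rw [hr]
    have hE : ((c - ((t : ℝ) / 2 - 1) * (2 / c)) * (c + 2 / c) + ((t : ℝ) - 1) * (-1)) * c ^ 2
        = c ^ 4 + 5 * c ^ 2 + 4 - (t : ℝ) * (2 * c ^ 2 + 2) := by
      field_simp; ring
    nlinarith [hE, key, hc2]
  · intro _
    have h : ((t : ℝ) - 1) * (-r / 2) * c + ((t : ℝ) - 1) * 1 * 1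
        = ((t:ℝ) - 1) * (1 - r * c / 2) := by ring
    rw [one_mul, h, hrc]
    norm_num
end
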